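/- Let A = R[X,Y]/(F, F_X, F_Y), let x, y denote the residue classes of X, Y in A, and let M be a maximal ideal of A. Then the localization at M of the module of Kähler differentials Ω¹_{A/R} (where A is regarded as an R-algebra via the canonical map R → A) is the zero module if and only if Hess_F(x,y) = F_{XX}(x,y)F_{YY}(x,y) − F_{XY}(x,y)² does not lie in M, i.e., if and only if Hess_F(x,y) is a unit in the localization A_M. -/

import Mathlib

open MvPolynomial

set_option synthInstance.maxHeartbeats 1000000
set_option maxHeartbeats 1000000

def idxSet (p q : ℕ) : Finset (ℕ × ℕ) :=
  (Finset.range q ×ˢ Finset.range p).filter fun t => t.1 * p + t.2 * q < p * q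

/-- `R = K[{A_νμ}]`, the polynomial ring in the indeterminates `A_νμ`, `(ν,μ) ∈ I`. -/
abbrev coefRing (K : Type) [Field K] (p q : ℕ) := MvPolynomial ↥(idxSet p q) K

/-- `R[X,Y]`, with `X 0 = X` and `X 1 = Y`. -/
abbrev genRing (K : Type) [Field K] (p q : ℕ) := MvPolynomial (Fin 2) (coefRing K p q)

/-- The generic normed Weierstraß polynomial
`F = Y^p − X^q + Σ_{(ν,μ) ∈ I} A_νμ X^ν Y^μ ∈ R[X,Y]` of type `p,q`. -/
noncomputable def genF (K : Type) [Field K] (p q : ℕ) : genRing K p q :=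
  X 1 ^ p - X 0 ^ q +
    ∑ i : idxSet p q, C (MvPolynomial.X i) * X 0 ^ (i : ℕ × ℕ).1 * X 1 ^ (i : ℕ × ℕ).2

/-- The Hessian determinant `G_{XX} G_{YY} − G_{XY}²` of a polynomial in `X, Y`. -/
noncomputable def hessPoly (K : Type) [CommRing K] (G : MvPolynomial (Fin 2) K) :
    MvPolynomial (Fin 2) K :=
  pderiv 0 (pderiv 0 G) * pderiv 1 (pderiv 1 G) - (pderiv 0 (pderiv 1 G)) ^ 2

section Aux

variable {R : Type} [CommRing R]

private lemma pderiv_pderiv_comm' (i j : Fin 2) (f : MvPolynomial (Fin 2) R) :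
    pderiv i (pderiv j f) = pderiv j (pderiv i f) := by
  induction f using MvPolynomial.induction_on' with
  | monomial s a =>
    simp only [pderiv_monomial]
    rw [show s - Finsupp.single j 1 - Finsupp.single i 1
        = s - Finsupp.single i 1 - Finsupp.single j 1 by
      rw [tsub_tsub, tsub_tsub, add_comm]]
    congr 1
    by_cases h : i = j
    · subst h; ring
    · rw [Finsupp.tsub_apply, Finsupp.tsub_apply, Finsupp.single_eq_of_ne' (Ne.symm h),
        Finsupp.single_eq_of_ne' h]
      simp only [tsub_zero]; ring
  | add p q hp hq => simp [hp, hq]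

private lemma chain_rule' {A : Type} [CommRing A] [Algebra R A]
    (π : MvPolynomial (Fin 2) R →ₐ[R] A)
    {N : Type} [AddCommGroup N] [Module R N] [Module A N] [IsScalarTower R A N]
    (D : Derivation R A N) (g : MvPolynomial (Fin 2) R) :
    D (π g) = π (pderiv 0 g) • D (π (X 0)) + π (pderiv 1 g) • D (π (X 1)) := by
  induction g using MvPolynomial.induction_on with
  | C a =>
    rw [show ((C a : MvPolynomial (Fin 2) R)) = algebraMap R _ a from rfl, AlgHom.commutes]
    simp
  | add p q hp hq =>
    simp only [map_add, hp, hq, add_smul]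
    abel
  | mul_X p i hp =>
    have h01 : (0 : Fin 2) ≠ 1 := by decide
    have h10 : (1 : Fin 2) ≠ 0 := by decide
    rw [map_mul, D.leibniz, hp]
    fin_cases i
    · simp only [Fin.zero_eta, Fin.mk_one]
      rw [pderiv_mul, pderiv_mul, pderiv_X_self, pderiv_X_of_ne h01, mul_one, mul_zero, add_zero,
        map_add, map_mul, map_mul]
      module
    · simp only [Fin.zero_eta, Fin.mk_one]
      rw [pderiv_mul, pderiv_mul, pderiv_X_self, pderiv_X_of_ne h10, mul_one, mul_zero, add_zero,
        map_add, map_mul, map_mul]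
      module

variable (G : MvPolynomial (Fin 2) R)

private noncomputable abbrev Jd : Ideal (MvPolynomial (Fin 2) R) :=
  Ideal.span {G, pderiv 0 G, pderiv 1 G}

private abbrev Ad := MvPolynomial (Fin 2) R ⧸ Jd G

noncomputable local instance (priority := high) instZeroAdQ (M : Ideal (Ad G)) :
    Zero (Ad G ⧸ M) := MulZeroClass.toZero

private lemma chainQ (g : MvPolynomial (Fin 2) R) :
    KaehlerDifferential.D R (Ad G) (Ideal.Quotient.mk (Jd G) g)
      = Ideal.Quotient.mk (Jd G) (pderiv 0 g)
          • KaehlerDifferential.D R (Ad G) (Ideal.Quotient.mk (Jd G) (X 0))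
        + Ideal.Quotient.mk (Jd G) (pderiv 1 g)
          • KaehlerDifferential.D R (Ad G) (Ideal.Quotient.mk (Jd G) (X 1)) := by
  have := chain_rule' (Ideal.Quotient.mkₐ R (Jd G)) (KaehlerDifferential.D R (Ad G)) g
  simpa [Ideal.Quotient.mkₐ_eq_mk] using this

private lemma spanQ (ω : KaehlerDifferential R (Ad G)) :
    ω ∈ Submodule.span (Ad G)
      ({KaehlerDifferential.D R (Ad G) (Ideal.Quotient.mk (Jd G) (X 0)),
        KaehlerDifferential.D R (Ad G) (Ideal.Quotient.mk (Jd G) (X 1))} :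
        Set (KaehlerDifferential R (Ad G))) := by
  have htop : Submodule.span (Ad G) (Set.range (KaehlerDifferential.D R (Ad G))) = ⊤ :=
    KaehlerDifferential.span_range_derivation R (Ad G)
  have hle : Submodule.span (Ad G) (Set.range (KaehlerDifferential.D R (Ad G)))
      ≤ Submodule.span (Ad G)
        ({KaehlerDifferential.D R (Ad G) (Ideal.Quotient.mk (Jd G) (X 0)),
          KaehlerDifferential.D R (Ad G) (Ideal.Quotient.mk (Jd G) (X 1))} :
          Set (KaehlerDifferential R (Ad G))) := by
    rw [Submodule.span_le]
    rintro _ ⟨s, rfl⟩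
    obtain ⟨g, rfl⟩ := Ideal.Quotient.mk_surjective (I := Jd G) s
    rw [chainQ G g]
    exact Submodule.add_mem _
      (Submodule.smul_mem _ _ (Submodule.subset_span (Set.mem_insert _ _)))
      (Submodule.smul_mem _ _ (Submodule.subset_span (Set.mem_insert_iff.2 (Or.inr rfl))))
  exact hle (htop ▸ Submodule.mem_top)

private lemma relQ0 :
    Ideal.Quotient.mk (Jd G) (pderiv 0 (pderiv 0 G))
        • KaehlerDifferential.D R (Ad G) (Ideal.Quotient.mk (Jd G) (X 0))
      + Ideal.Quotient.mk (Jd G) (pderiv 0 (pderiv 1 G))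
        • KaehlerDifferential.D R (Ad G) (Ideal.Quotient.mk (Jd G) (X 1)) = 0 := by
  have h := chainQ G (pderiv 0 G)
  rw [show Ideal.Quotient.mk (Jd G) (pderiv 0 G) = 0 from
      Ideal.Quotient.eq_zero_iff_mem.2 (Ideal.subset_span (by simp)), map_zero,
    pderiv_pderiv_comm' 1 0] at h
  exact h.symm

private lemma relQ1 :
    Ideal.Quotient.mk (Jd G) (pderiv 0 (pderiv 1 G))
        • KaehlerDifferential.D R (Ad G) (Ideal.Quotient.mk (Jd G) (X 0))
      + Ideal.Quotient.mk (Jd G) (pderiv 1 (pderiv 1 G))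
        • KaehlerDifferential.D R (Ad G) (Ideal.Quotient.mk (Jd G) (X 1)) = 0 := by
  have h := chainQ G (pderiv 1 G)
  rw [show Ideal.Quotient.mk (Jd G) (pderiv 1 G) = 0 from
      Ideal.Quotient.eq_zero_iff_mem.2 (Ideal.subset_span (by simp)), map_zero] at h
  exact h.symm

private lemma hess_smul_dx :
    Ideal.Quotient.mk (Jd G)
        (pderiv 0 (pderiv 0 G) * pderiv 1 (pderiv 1 G) - (pderiv 0 (pderiv 1 G)) ^ 2)
      • KaehlerDifferential.D R (Ad G) (Ideal.Quotient.mk (Jd G) (X 0)) = 0 := by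
  set a' := Ideal.Quotient.mk (Jd G) (pderiv 0 (pderiv 0 G))
  set b' := Ideal.Quotient.mk (Jd G) (pderiv 0 (pderiv 1 G))
  set c' := Ideal.Quotient.mk (Jd G) (pderiv 1 (pderiv 1 G))
  set dx := KaehlerDifferential.D R (Ad G) (Ideal.Quotient.mk (Jd G) (X 0))
  set dy := KaehlerDifferential.D R (Ad G) (Ideal.Quotient.mk (Jd G) (X 1))
  rw [map_sub, map_mul, map_pow]
  have h : (a' * c' - b' ^ 2) • dx
      = c' • (a' • dx + b' • dy) - b' • (b' • dx + c' • dy) := by module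
  rw [h, relQ0, relQ1]
  simp

private lemma hess_smul_dy :
    Ideal.Quotient.mk (Jd G)
        (pderiv 0 (pderiv 0 G) * pderiv 1 (pderiv 1 G) - (pderiv 0 (pderiv 1 G)) ^ 2)
      • KaehlerDifferential.D R (Ad G) (Ideal.Quotient.mk (Jd G) (X 1)) = 0 := by
  set a' := Ideal.Quotient.mk (Jd G) (pderiv 0 (pderiv 0 G))
  set b' := Ideal.Quotient.mk (Jd G) (pderiv 0 (pderiv 1 G))
  set c' := Ideal.Quotient.mk (Jd G) (pderiv 1 (pderiv 1 G))
  set dx := KaehlerDifferential.D R (Ad G) (Ideal.Quotient.mk (Jd G) (X 0))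
  set dy := KaehlerDifferential.D R (Ad G) (Ideal.Quotient.mk (Jd G) (X 1))
  rw [map_sub, map_mul, map_pow]
  have h : (a' * c' - b' ^ 2) • dy
      = a' • (b' • dx + c' • dy) - b' • (a' • dx + b' • dy) := by module
  rw [h, relQ0, relQ1]
  simp

private lemma smul_mk_quot (M : Ideal (Ad G)) (x : Ad G) (k : Ad G ⧸ M) :
    x • k = Ideal.Quotient.mk M x * k := by
  obtain ⟨k₀, rfl⟩ := Ideal.Quotient.mk_surjective k
  rw [← map_mul, ← Ideal.Quotient.mk_eq_mk, ← Ideal.Quotient.mk_eq_mk,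
    ← Submodule.Quotient.mk_smul, smul_eq_mul]


set_option maxHeartbeats 8000000 in
private lemma exists_functional (M : Ideal (Ad G)) (hM : M.IsMaximal)
    (hmem : Ideal.Quotient.mk (Jd G)
        (pderiv 0 (pderiv 0 G) * pderiv 1 (pderiv 1 G) - (pderiv 0 (pderiv 1 G)) ^ 2) ∈ M) :
    ∃ u v : Ad G ⧸ M, ¬(u = 0 ∧ v = 0) ∧
      ∃ L : KaehlerDifferential R (Ad G) →ₗ[Ad G] Ad G ⧸ M,
        L (KaehlerDifferential.D R (Ad G) (Ideal.Quotient.mk (Jd G) (X 0))) = u ∧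
        L (KaehlerDifferential.D R (Ad G) (Ideal.Quotient.mk (Jd G) (X 1))) = v := by
  haveI : Nontrivial (Ad G ⧸ M) := Ideal.Quotient.nontrivial_iff.mpr hM.ne_top
  set π := Ideal.Quotient.mk (Jd G) with hπ
  set ψ' := Ideal.Quotient.mk M with hψ'
  set ψ : MvPolynomial (Fin 2) R →+* Ad G ⧸ M := ψ'.comp π with hψ
  have hψa : ∀ g, ψ g = ψ' (π g) := fun g => rfl
  set a := ψ (pderiv 0 (pderiv 0 G)) with ha
  set b := ψ (pderiv 0 (pderiv 1 G)) with hb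
  set c := ψ (pderiv 1 (pderiv 1 G)) with hc
  have hdet : a * c - b ^ 2 = 0 := by
    have h0 : ψ' (π (pderiv 0 (pderiv 0 G) * pderiv 1 (pderiv 1 G)
        - (pderiv 0 (pderiv 1 G)) ^ 2)) = 0 := Ideal.Quotient.eq_zero_iff_mem.2 hmem
    rw [map_sub, map_mul, map_pow, map_sub, map_mul, map_pow] at h0
    exact h0
  obtain ⟨u, v, hne, hu1, hu2⟩ :
      ∃ u v : Ad G ⧸ M, ¬(u = 0 ∧ v = 0) ∧ a * u + b * v = 0 ∧ b * u + c * v = 0 := by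
    by_cases hab : a = 0 ∧ b = 0
    · exact ⟨1, 0, fun h => hM.ne_top ((Ideal.eq_top_iff_one _).2
        (Ideal.Quotient.eq_zero_iff_mem.1 ((map_one (Ideal.Quotient.mk M)).trans h.1))), by rw [hab.1, hab.2]; ring,
        by rw [hab.2]; ring⟩
    · refine ⟨b, -a, ?_, by ring, by linear_combination -hdet⟩
      intro h
      exact hab ⟨neg_eq_zero.1 h.2, h.1⟩
  have hψJ : ∀ g ∈ Jd G, ψ g = 0 := by
    intro g hg
    rw [hψa, Ideal.Quotient.eq_zero_iff_mem.2 hg, map_zero]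
  set l₀ : MvPolynomial (Fin 2) R → Ad G ⧸ M :=
    fun g => ψ (pderiv 0 g) * u + ψ (pderiv 1 g) * v with hl₀def
  have hl₀J : ∀ g ∈ Jd G, l₀ g = 0 := by
    intro g hg
    induction hg using Submodule.span_induction with
    | mem x hx =>
      rcases hx with rfl | rfl | rfl
      · have e0 : ψ (pderiv 0 x) = 0 :=
          hψJ _ (Ideal.subset_span (by simp))
        have e1 : ψ (pderiv 1 x) = 0 :=
          hψJ _ (Ideal.subset_span (by simp))
        simp [hl₀def, e0, e1]
      · show ψ (pderiv 0 (pderiv 0 G)) * u + ψ (pderiv 1 (pderiv 0 G)) * v = 0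
        rw [pderiv_pderiv_comm' 1 0]
        exact hu1
      · show ψ (pderiv 0 (pderiv 1 G)) * u + ψ (pderiv 1 (pderiv 1 G)) * v = 0
        exact hu2
    | zero => simp [hl₀def]
    | add x y hx hy ihx ihy =>
      show ψ (pderiv 0 (x + y)) * u + ψ (pderiv 1 (x + y)) * v = 0
      rw [map_add, map_add, map_add, map_add]
      have ihx' : ψ (pderiv 0 x) * u + ψ (pderiv 1 x) * v = 0 := ihx
      have ihy' : ψ (pderiv 0 y) * u + ψ (pderiv 1 y) * v = 0 := ihy
      linear_combination ihx' + ihy'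
    | smul p x hx ihx =>
      have hx0 : ψ x = 0 := hψJ x hx
      show ψ (pderiv 0 (p * x)) * u + ψ (pderiv 1 (p * x)) * v = 0
      rw [pderiv_mul, pderiv_mul, map_add, map_add, map_mul, map_mul, map_mul, map_mul, hx0]
      have ihx' : ψ (pderiv 0 x) * u + ψ (pderiv 1 x) * v = 0 := ihx
      linear_combination ψ p * ihx'
  have hl₀sub : ∀ g h : MvPolynomial (Fin 2) R, l₀ (g - h) = l₀ g - l₀ h := by
    intro g h
    show ψ (pderiv 0 (g - h)) * u + ψ (pderiv 1 (g - h)) * v = _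
    rw [map_sub, map_sub, map_sub, map_sub]
    show _ = (ψ (pderiv 0 g) * u + ψ (pderiv 1 g) * v) - (ψ (pderiv 0 h) * u + ψ (pderiv 1 h) * v)
    ring
  have wd : ∀ g h : MvPolynomial (Fin 2) R,
      (Submodule.quotientRel ((Jd G) : Submodule (MvPolynomial (Fin 2) R)
        (MvPolynomial (Fin 2) R))).r g h → l₀ g = l₀ h := by
    intro g h hgh
    have hsub : g - h ∈ Jd G := (Submodule.quotientRel_def _).mp hgh
    have := hl₀J _ hsub
    rw [hl₀sub] at this
    exact sub_eq_zero.mp this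
  set lfun : Ad G → Ad G ⧸ M := fun x => Quotient.liftOn' x l₀ wd with hlfun
  have hlmk : ∀ g : MvPolynomial (Fin 2) R, lfun (π g) = l₀ g := fun g => rfl
  have hRt : ∀ (t : R) (k : Ad G ⧸ M), t • k = ψ (C t) * k := by
    intro t k
    rw [Algebra.smul_def (A := Ad G ⧸ M), IsScalarTower.algebraMap_apply R (Ad G) (Ad G ⧸ M),
      IsScalarTower.algebraMap_apply R (MvPolynomial (Fin 2) R) (Ad G),
      Ideal.Quotient.algebraMap_eq, Ideal.Quotient.algebraMap_eq]
    rfl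
  have hsmul0 : ∀ (t : R) (g : MvPolynomial (Fin 2) R), l₀ (t • g) = t • l₀ g := by
    intro t g
    show ψ (pderiv 0 (t • g)) * u + ψ (pderiv 1 (t • g)) * v = _
    rw [(pderiv 0).map_smul, (pderiv 1).map_smul, smul_eq_C_mul, smul_eq_C_mul,
      map_mul, map_mul, hRt]
    show _ = ψ (C t) * (ψ (pderiv 0 g) * u + ψ (pderiv 1 g) * v)
    ring
  set l : Ad G →ₗ[R] Ad G ⧸ M :=
    { toFun := lfun
      map_add' := by
        intro x y
        obtain ⟨g, rfl⟩ := Ideal.Quotient.mk_surjective (I := Jd G) x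
        obtain ⟨h, rfl⟩ := Ideal.Quotient.mk_surjective (I := Jd G) y
        rw [← map_add, hlmk, hlmk, hlmk]
        show ψ (pderiv 0 (g + h)) * u + ψ (pderiv 1 (g + h)) * v = _
        rw [map_add, map_add, map_add, map_add]
        show _ = (ψ (pderiv 0 g) * u + ψ (pderiv 1 g) * v)
          + (ψ (pderiv 0 h) * u + ψ (pderiv 1 h) * v)
        ring
      map_smul' := by
        intro t x
        obtain ⟨g, rfl⟩ := Ideal.Quotient.mk_surjective (I := Jd G) x
        have e : t • (π g) = π (t • g) := by
          rw [← Ideal.Quotient.mkₐ_eq_mk (R₁ := R)]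
          exact (map_smul (Ideal.Quotient.mkₐ R (Jd G)) t g).symm
        rw [RingHom.id_apply, e]
        show lfun (π (t • g)) = t • lfun (π g)
        rw [hlmk, hlmk, hsmul0] } with hl
  have hlapp : ∀ g : MvPolynomial (Fin 2) R, l (π g) = l₀ g := fun g => rfl
  set Dq : Derivation R (Ad G) (Ad G ⧸ M) :=
    { toLinearMap := l
      map_one_eq_zero' := by
        show l 1 = 0
        rw [show (1 : Ad G) = π 1 from (map_one π).symm, hlapp]
        show ψ (pderiv 0 1) * u + ψ (pderiv 1 1) * v = 0
        rw [pderiv_one, pderiv_one, map_zero]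
        ring
      leibniz' := by
        intro x y
        obtain ⟨g, rfl⟩ := Ideal.Quotient.mk_surjective (I := Jd G) x
        obtain ⟨h, rfl⟩ := Ideal.Quotient.mk_surjective (I := Jd G) y
        show l (π g * π h) = π g • l (π h) + π h • l (π g)
        rw [← map_mul, hlapp, hlapp, hlapp, smul_mk_quot G M, smul_mk_quot G M]
        show ψ (pderiv 0 (g * h)) * u + ψ (pderiv 1 (g * h)) * v
          = ψ' (π g) * (ψ (pderiv 0 h) * u + ψ (pderiv 1 h) * v)
            + ψ' (π h) * (ψ (pderiv 0 g) * u + ψ (pderiv 1 g) * v)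
        rw [pderiv_mul, pderiv_mul, map_add, map_add, map_mul, map_mul, map_mul, map_mul,
          ← hψa, ← hψa]
        ring } with hDq
  refine ⟨u, v, hne, Dq.liftKaehlerDifferential, ?_, ?_⟩
  · rw [Derivation.liftKaehlerDifferential_comp_D]
    show l (π (X 0)) = u
    rw [hlapp]
    show ψ (pderiv 0 (X 0)) * u + ψ (pderiv 1 (X 0)) * v = u
    rw [pderiv_X_self, pderiv_X_of_ne (show (0 : Fin 2) ≠ 1 by decide), map_one, map_zero]
    ring
  · rw [Derivation.liftKaehlerDifferential_comp_D]
    show l (π (X 1)) = v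
    rw [hlapp]
    show ψ (pderiv 0 (X 1)) * u + ψ (pderiv 1 (X 1)) * v = v
    rw [pderiv_X_self, pderiv_X_of_ne (show (1 : Fin 2) ≠ 0 by decide), map_one, map_zero]
    ring

set_option maxHeartbeats 4000000 in
theorem hess_key (M : Ideal (Ad G)) (hM : M.IsMaximal) :
    Subsingleton (LocalizedModule (M.primeCompl (hp := hM.isPrime))
      (KaehlerDifferential R (Ad G))) ↔
    Ideal.Quotient.mk (Jd G)
      (pderiv 0 (pderiv 0 G) * pderiv 1 (pderiv 1 G) - (pderiv 0 (pderiv 1 G)) ^ 2) ∉ M := by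
  constructor
  · intro hsub hmem
    rw [LocalizedModule.subsingleton_iff] at hsub
    obtain ⟨r, hr, hrdx⟩ :=
      hsub (KaehlerDifferential.D R (Ad G) (Ideal.Quotient.mk (Jd G) (X 0)))
    obtain ⟨s, hs, hsdy⟩ :=
      hsub (KaehlerDifferential.D R (Ad G) (Ideal.Quotient.mk (Jd G) (X 1)))
    haveI : M.IsPrime := hM.isPrime
    obtain ⟨u, v, hne, L, hLu, hLv⟩ := exists_functional G M hM hmem
    have hru : Ideal.Quotient.mk M r * u = 0 := by
      have := congrArg L hrdx
      rw [map_smul, hLu, map_zero, smul_mk_quot G M] at this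
      exact this
    have hsv : Ideal.Quotient.mk M s * v = 0 := by
      have := congrArg L hsdy
      rw [map_smul, hLv, map_zero, smul_mk_quot G M] at this
      exact this
    have hrne : Ideal.Quotient.mk M r ≠ 0 := fun h0 =>
      hr (Ideal.Quotient.eq_zero_iff_mem.mp h0)
    have hsne : Ideal.Quotient.mk M s ≠ 0 := fun h0 =>
      hs (Ideal.Quotient.eq_zero_iff_mem.mp h0)
    exact hne ⟨(mul_eq_zero.mp hru).resolve_left hrne,
      (mul_eq_zero.mp hsv).resolve_left hsne⟩
  · intro hmem
    rw [LocalizedModule.subsingleton_iff]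
    intro m
    refine ⟨Ideal.Quotient.mk (Jd G)
      (pderiv 0 (pderiv 0 G) * pderiv 1 (pderiv 1 G) - (pderiv 0 (pderiv 1 G)) ^ 2),
      hmem, ?_⟩
    induction spanQ G m using Submodule.span_induction with
    | mem x hx =>
      rcases hx with rfl | rfl
      · exact hess_smul_dx G
      · exact hess_smul_dy G
    | zero => simp
    | add x y hx hy ihx ihy => rw [smul_add, ihx, ihy, add_zero]
    | smul t x hx ihx => rw [smul_comm, ihx, smul_zero]

end Aux

/-- For a maximal ideal `M` of `A = R[X,Y]/(F, F_X, F_Y)`, the localization at `M` of the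
module of Kähler differentials `Ω¹_{A/R}` vanishes iff the Hessian determinant
`Hess_F(x,y)` (the residue class of `Hess_F` in `A`) does not lie in `M`. -/
theorem kaehler_localization_zero_iff_hessian_not_mem
    (K : Type) [Field K] [IsAlgClosed K] [CharZero K]
    (p q : ℕ) (hp : 1 < p) (hpq : p < q) (hco : Nat.Coprime p q)
    (M : Ideal (genRing K p q ⧸
        Ideal.span {genF K p q, pderiv 0 (genF K p q), pderiv 1 (genF K p q)}))
    (hM : M.IsMaximal) :
    Subsingleton
        (@LocalizedModule (genRing K p q ⧸
            Ideal.span {genF K p q, pderiv 0 (genF K p q), pderiv 1 (genF K p q)}) _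
          (M.primeCompl (hp := @Ideal.IsMaximal.isPrime _ (Ideal.Quotient.commSemiring _) M hM))
          (KaehlerDifferential (coefRing K p q)
            (genRing K p q ⧸
              Ideal.span {genF K p q, pderiv 0 (genF K p q), pderiv 1 (genF K p q)})) _
          (instModuleKaehlerDifferentialOfSMulCommClass _ _)) ↔
      Ideal.Quotient.mk (Ideal.span {genF K p q, pderiv 0 (genF K p q), pderiv 1 (genF K p q)})
        (hessPoly (coefRing K p q) (genF K p q)) ∉ M := by
  exact hess_key (genF K p q) M hM
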